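/- (Interlacing) For any weighted graph G and vertex i, the roots of μ(G) and μ(G∖i) interlace: between any two roots of μ(G) there is a root of μ(G∖i) and between any two roots of μ(G∖i) there is a root of μ(G); moreover, for every real number θ, m_θ(G∖i) ∈ {m_θ(G) − 1, m_θ(G), m_θ(G) + 1}. -/

import Mathlib

/-!
Write `p = μ(A)` and `q = μ(A ∖ i)`. The vertex recursion
`μ(A) = (x - r_i) μ(A ∖ i) + ∑_k λ_{ik} μ(A ∖ {i, k})` gives, for the Wronskian
`W(q, p) = q p' - q' p`, the identity
`W(q, p) = q² + ∑_k (-λ_{ik}) W(μ(A ∖ {i, k}), q)`, so by induction on `|A|` we get `q² ≤ W(q, p)`.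
Since `W(q, p) ≥ 0`, `p / q` is nondecreasing on every interval where `q` has no root, which forces
a root of `q` between two roots of `p`; as `W(-p, q) = W(q, p)`, the same holds with the roles
exchanged. If `p` vanished at `θ` to order `m_θ(q) + 2`, then `W(q, p)` would vanish to order
`2 m_θ(q) + 1`, contradicting `q² ≤ W(q, p)`; conversely every term of the recursion is divisible
by `(x - θ) ^ (m_θ(q) - 1)`, by the first bound applied to `A ∖ i`.
-/

open Polynomial
open scoped Classical

/-- A matching of the weighted graph with edge weights `lam`, inside the vertex set `A`:
a set of pairs `(j,k)` with `j < k`, `lam j k ≠ 0`, endpoints in `A`,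
no two pairs sharing a vertex. -/
def IsMatching {n : ℕ} (lam : Fin n → Fin n → ℝ) (A : Finset (Fin n))
    (M : Finset (Fin n × Fin n)) : Prop :=
  (∀ e ∈ M, e.1 < e.2 ∧ lam e.1 e.2 ≠ 0 ∧ e.1 ∈ A ∧ e.2 ∈ A) ∧
  ∀ e ∈ M, ∀ f ∈ M, e ≠ f → e.1 ≠ f.1 ∧ e.1 ≠ f.2 ∧ e.2 ≠ f.1 ∧ e.2 ≠ f.2

/-- The vertices covered by a matching. -/
def mVerts {n : ℕ} (M : Finset (Fin n × Fin n)) : Finset (Fin n) :=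
  M.image Prod.fst ∪ M.image Prod.snd

/-- The finite set of matchings inside the vertex set `A`. -/
noncomputable def matchings {n : ℕ} (lam : Fin n → Fin n → ℝ) (A : Finset (Fin n)) :
    Finset (Finset (Fin n × Fin n)) :=
  Finset.univ.filter fun M => IsMatching lam A M

/-- The weighted matching polynomial of the induced weighted subgraph on the vertex set `A`
(the matching polynomial of the empty graph is `1`). -/
noncomputable def mu {n : ℕ} (r : Fin n → ℝ) (lam : Fin n → Fin n → ℝ)
    (A : Finset (Fin n)) : Polynomial ℝ :=
  ∑ M ∈ matchings lam A,
    (∏ i ∈ A \ mVerts M, (X - C (r i))) * C (∏ e ∈ M, lam e.1 e.2)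

/-- The multivariate matching polynomial evaluated at the complex numbers `x 1, …, x n`. -/
noncomputable def muC {n : ℕ} (lam : Fin n → Fin n → ℝ) (x : Fin n → ℂ) : ℂ :=
  ∑ M ∈ matchings lam (Finset.univ : Finset (Fin n)),
    (∏ i ∈ Finset.univ \ mVerts M, x i) * ∏ e ∈ M, (lam e.1 e.2 : ℂ)

/-- The constant `B_G`: for `n ≥ 3` the maximum over vertices `j` and sets
`A ⊆ [n] ∖ {j}` with `|A| = n - 2` of `∑_{k ∈ A} (-λ_{jk})`; `-λ_{12}/4` for `n = 2`;
`0` for `n = 1`. -/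
noncomputable def BG (n : ℕ) (lam : Fin n → Fin n → ℝ) : ℝ :=
  if 3 ≤ n then
    sSup {S : ℝ | ∃ j : Fin n, ∃ A : Finset (Fin n),
      j ∉ A ∧ A.card = n - 2 ∧ S = ∑ k ∈ A, -lam j k}
  else if h : n = 2 then -lam ⟨0, by omega⟩ ⟨1, by omega⟩ / 4
  else 0

/-- `l` is a path from `i` to `j` inside the vertex set `A`: a nonempty list of distinct
vertices of `A`, starting at `i`, ending at `j`, with consecutive vertices joined by
edges of nonzero weight. -/
def IsPathIn {n : ℕ} (lam : Fin n → Fin n → ℝ) (A : Finset (Fin n)) (i j : Fin n)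
    (l : List (Fin n)) : Prop :=
  l ≠ [] ∧ l.Nodup ∧ (∀ v ∈ l, v ∈ A) ∧ l.head? = some i ∧ l.getLast? = some j ∧
    l.Chain' fun u v => lam u v ≠ 0

/-- `λ_c`: the product of `-λ_e` over the edges `e` of the path `c` (equal to `1` for a
trivial path). -/
def pathWeight {n : ℕ} (lam : Fin n → Fin n → ℝ) (l : List (Fin n)) : ℝ :=
  ((l.zip l.tail).map fun p => -lam p.1 p.2).prod

/-- A real polynomial viewed as a rational function. -/
noncomputable def toRF (p : Polynomial ℝ) : RatFunc ℝ :=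
  algebraMap (Polynomial ℝ) (RatFunc ℝ) p

/-- The graph continued fraction `α_v = μ(A)/μ(A ∖ v)` as a rational function. -/
noncomputable def alpha {n : ℕ} (r : Fin n → ℝ) (lam : Fin n → Fin n → ℝ) (v : Fin n)
    (A : Finset (Fin n)) : RatFunc ℝ :=
  toRF (mu r lam A) / toRF (mu r lam (A.erase v))

/-- `λ_{i∼j} = -(∑_{c ∈ [i→j]} λ_c · μ(A∖c)²) / μ(A∖{i,j})²` as a rational function. -/
noncomputable def lamSim {n : ℕ} (r : Fin n → ℝ) (lam : Fin n → Fin n → ℝ) (i j : Fin n)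
    (A : Finset (Fin n)) : RatFunc ℝ :=
  -(∑ᶠ l ∈ {l : List (Fin n) | IsPathIn lam A i j l},
      toRF (C (pathWeight lam l) * mu r lam (A \ l.toFinset) ^ 2)) /
    toRF (mu r lam ((A.erase i).erase j)) ^ 2

/-- The value of a rational function at `θ`, taken after cancelling common factors;
`none` encodes the value `∞` (a pole). -/
noncomputable def valAt (f : RatFunc ℝ) (θ : ℝ) : Option ℝ :=
  if f.denom.eval θ = 0 then none else some (f.num.eval θ / f.denom.eval θ)

/-- The set `0_{θ,A}` of θ-essential vertices: `m_θ(A∖v) = m_θ(A) - 1`. -/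
def zeroSet {n : ℕ} (r : Fin n → ℝ) (lam : Fin n → Fin n → ℝ) (θ : ℝ)
    (A : Finset (Fin n)) : Set (Fin n) :=
  {v | v ∈ A ∧
    (mu r lam A).rootMultiplicity θ = (mu r lam (A.erase v)).rootMultiplicity θ + 1}

/-- The set `∞_{θ,A}`: `m_θ(A∖v) = m_θ(A) + 1`. -/
def infSet {n : ℕ} (r : Fin n → ℝ) (lam : Fin n → Fin n → ℝ) (θ : ℝ)
    (A : Finset (Fin n)) : Set (Fin n) :=
  {v | v ∈ A ∧
    (mu r lam (A.erase v)).rootMultiplicity θ = (mu r lam A).rootMultiplicity θ + 1}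

/-- The set `+_{θ,A}`: `m_θ(A∖v) = m_θ(A)` and `α_v(A)(θ) > 0`. -/
def plusSet {n : ℕ} (r : Fin n → ℝ) (lam : Fin n → Fin n → ℝ) (θ : ℝ)
    (A : Finset (Fin n)) : Set (Fin n) :=
  {v | v ∈ A ∧
    (mu r lam (A.erase v)).rootMultiplicity θ = (mu r lam A).rootMultiplicity θ ∧
    ∃ t : ℝ, valAt (alpha r lam v A) θ = some t ∧ 0 < t}

/-- The set `−_{θ,A}`: `m_θ(A∖v) = m_θ(A)` and `α_v(A)(θ) < 0`. -/
def minusSet {n : ℕ} (r : Fin n → ℝ) (lam : Fin n → Fin n → ℝ) (θ : ℝ)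
    (A : Finset (Fin n)) : Set (Fin n) :=
  {v | v ∈ A ∧
    (mu r lam (A.erase v)).rootMultiplicity θ = (mu r lam A).rootMultiplicity θ ∧
    ∃ t : ℝ, valAt (alpha r lam v A) θ = some t ∧ t < 0}

/-- The frontier `∂0_{θ,A}`: vertices not in `0_{θ,A}` with a neighbor in `0_{θ,A}`. -/
def frontierZero {n : ℕ} (r : Fin n → ℝ) (lam : Fin n → Fin n → ℝ) (θ : ℝ)
    (A : Finset (Fin n)) : Set (Fin n) :=
  {v | v ∈ A ∧ v ∉ zeroSet r lam θ A ∧ ∃ w ∈ zeroSet r lam θ A, lam v w ≠ 0}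

/-- The underlying simple graph: edges are the pairs with nonzero edge weight. -/
def wGraph {n : ℕ} (lam : Fin n → Fin n → ℝ) : SimpleGraph (Fin n) :=
  SimpleGraph.fromRel fun j k => lam j k ≠ 0

namespace Polynomial

variable {p q : ℝ[X]}

lemma pow_dvd_wronskian {θ : ℝ} {a b : ℕ} (hp : (X - C θ) ^ a ∣ p) (hq : (X - C θ) ^ b ∣ q) :
    (X - C θ) ^ (a + b - 1) ∣ wronskian p q := by
  refine dvd_sub ?_ ?_
  · exact (pow_dvd_pow _ (by omega)).trans
      (pow_add (X - C θ) a (b - 1) ▸ mul_dvd_mul hp (pow_sub_one_dvd_derivative_of_pow_dvd hq))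
  · exact (pow_dvd_pow _ (by omega)).trans
      (pow_add (X - C θ) (a - 1) b ▸ mul_dvd_mul (pow_sub_one_dvd_derivative_of_pow_dvd hp) hq)

/-- Dividing `q ^ 2 ≤ f` by `(x - θ) ^ (2 * m)` and letting `x → θ⁺` would make the cofactor of
`(X - C θ) ^ m` in `q` vanish at `θ`. -/
lemma not_pow_dvd_of_sq_le {f : ℝ[X]} (hq : q ≠ 0) (h : ∀ x, q.eval x ^ 2 ≤ f.eval x) (θ : ℝ) :
    ¬ (X - C θ) ^ (2 * q.rootMultiplicity θ + 1) ∣ f := by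
  rintro ⟨g, rfl⟩
  set m := q.rootMultiplicity θ
  set v := q /ₘ (X - C θ) ^ m
  have hqv : ∀ x, q.eval x = (x - θ) ^ m * v.eval x := fun x => by
    conv_lhs => rw [← pow_mul_divByMonic_rootMultiplicity_eq q θ]
    simp [v, m]
  have hIoi : Set.Ioi θ ⊆ {x | v.eval x ^ 2 ≤ (x - θ) * g.eval x} := fun x (hx : θ < x) => by
    have hx' := h x
    rw [hqv, eval_mul, eval_pow, eval_sub, eval_X, eval_C] at hx'
    have hpos : 0 < (x - θ) ^ (2 * m) := pow_pos (sub_pos.2 hx) _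
    refine le_of_mul_le_mul_left ?_ hpos
    calc (x - θ) ^ (2 * m) * v.eval x ^ 2 = ((x - θ) ^ m * v.eval x) ^ 2 := by ring
      _ ≤ (x - θ) ^ (2 * m + 1) * g.eval x := hx'
      _ = (x - θ) ^ (2 * m) * ((x - θ) * g.eval x) := by ring
  have hclosed : IsClosed {x | v.eval x ^ 2 ≤ (x - θ) * g.eval x} :=
    isClosed_le (by fun_prop) (by fun_prop)
  have hθ : v.eval θ ^ 2 ≤ 0 := by
    have h := hclosed.closure_subset_iff.2 hIoi (closure_Ioi θ ▸ Set.self_mem_Ici)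
    rwa [Set.mem_ofPred_eq, sub_self, zero_mul] at h
  exact eval_divByMonic_pow_rootMultiplicity_ne_zero θ hq
    (pow_eq_zero_iff two_ne_zero |>.1 (le_antisymm hθ (sq_nonneg _)))

lemma rootMultiplicity_le_succ_of_sq_le_wronskian (hq : q ≠ 0)
    (h : ∀ x, q.eval x ^ 2 ≤ (wronskian q p).eval x) (θ : ℝ) :
    p.rootMultiplicity θ ≤ q.rootMultiplicity θ + 1 := by
  by_contra! hlt
  refine not_pow_dvd_of_sq_le hq h θ ((pow_dvd_pow _ ?_).trans (pow_dvd_wronskian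
    (pow_rootMultiplicity_dvd q θ) (pow_rootMultiplicity_dvd p θ)))
  omega

lemma ne_zero_of_sq_le_wronskian (hq : q ≠ 0) (h : ∀ x, q.eval x ^ 2 ≤ (wronskian q p).eval x) :
    p ≠ 0 := by
  rintro rfl
  refine hq (funext fun x => ?_)
  simpa using h x

lemma sq_le_wronskian_of_eq_sum {ι : Type*} {s : Finset ι} {c : ℝ} {l : ι → ℝ} {g : ι → ℝ[X]}
    (hl : ∀ k ∈ s, l k ≤ 0) (hg : ∀ k ∈ s, ∀ x, 0 ≤ (wronskian (g k) q).eval x)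
    (hp : p = (X - C c) * q + ∑ k ∈ s, C (l k) * g k) (x : ℝ) :
    q.eval x ^ 2 ≤ (wronskian q p).eval x := by
  have hW : wronskian q p = q ^ 2 + ∑ k ∈ s, C (-l k) * wronskian (g k) q := by
    have hsum : ∑ k ∈ s, C (-l k) * wronskian (g k) q
        = q * ∑ k ∈ s, C (l k) * derivative (g k) - derivative q * ∑ k ∈ s, C (l k) * g k := by
      rw [Finset.mul_sum, Finset.mul_sum, ← Finset.sum_sub_distrib]
      exact Finset.sum_congr rfl fun k _ => by rw [wronskian, map_neg]; ring
    rw [hsum, hp, wronskian]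
    simp only [derivative_add, derivative_mul, derivative_sub, derivative_X, derivative_C,
      derivative_sum, zero_mul, zero_add, sub_zero, one_mul]
    ring
  rw [hW, eval_add, eval_pow, eval_finsetSum, le_add_iff_nonneg_right]
  exact Finset.sum_nonneg fun k hk => by
    rw [eval_mul, eval_C]; exact mul_nonneg (neg_nonneg.2 (hl k hk)) (hg k hk x)

lemma exists_isRoot_mem_Icc_of_wronskian_nonneg (hp : p ≠ 0)
    (hW : ∀ x, 0 ≤ (wronskian q p).eval x) {a b : ℝ} (hab : a < b)
    (ha : p.IsRoot a) (hb : p.IsRoot b) : ∃ c, a ≤ c ∧ c ≤ b ∧ q.IsRoot c := by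
  by_contra! hq
  have hq' : ∀ x ∈ Set.Icc a b, q.eval x ≠ 0 := fun x hx => hq x hx.1 hx.2
  have hderiv : ∀ x ∈ Set.Icc a b,
      HasDerivAt (fun y => p.eval y / q.eval y) ((wronskian q p).eval x / q.eval x ^ 2) x :=
    fun x hx => by
      rw [show (wronskian q p).eval x = (derivative p).eval x * q.eval x
          - p.eval x * (derivative q).eval x by rw [wronskian, eval_sub, eval_mul, eval_mul]; ring]
      exact (p.hasDerivAt x).div (q.hasDerivAt x) (hq' x hx)
  have hmono : MonotoneOn (fun y => p.eval y / q.eval y) (Set.Icc a b) := by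
    refine monotoneOn_of_hasDerivWithinAt_nonneg (convex_Icc a b)
      (fun x hx => (hderiv x hx).continuousAt.continuousWithinAt)
      (fun x hx => (hderiv x (interior_subset hx)).hasDerivWithinAt)
      (fun x hx => div_nonneg (hW x) (sq_nonneg _))
  have hzero : ∀ x ∈ Set.Icc a b, p.eval x = 0 := fun x hx => by
    have h1 := hmono (Set.left_mem_Icc.2 hab.le) hx hx.1
    have h2 := hmono hx (Set.right_mem_Icc.2 hab.le) hx.2
    simp only [ha.eq_zero, hb.eq_zero, zero_div] at h1 h2
    simpa [hq' x hx] using le_antisymm h2 h1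
  exact hp (eq_zero_of_infinite_isRoot p ((Set.Icc_infinite hab).mono hzero))

end Polynomial

section MatchingPolynomial

open Finset

variable {n : ℕ} {r : Fin n → ℝ} {lam : Fin n → Fin n → ℝ} {A : Finset (Fin n)}
  {M : Finset (Fin n × Fin n)}

lemma mem_matchings : M ∈ matchings lam A ↔ IsMatching lam A M := by
  simp [matchings]

lemma mem_mVerts {v : Fin n} : v ∈ mVerts M ↔ ∃ e ∈ M, v = e.1 ∨ v = e.2 := by
  simp only [mVerts, mem_union, mem_image]
  grind

lemma IsMatching.eq_of_mem_of_mem (hM : IsMatching lam A M) {e f : Fin n × Fin n} (he : e ∈ M)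
    (hf : f ∈ M) {v : Fin n} (hve : v = e.1 ∨ v = e.2) (hvf : v = f.1 ∨ v = f.2) : e = f := by
  by_contra hef
  have := hM.2 e he f hf hef
  grind

lemma isMatching_erase_iff {i : Fin n} :
    IsMatching lam (A.erase i) M ↔ IsMatching lam A M ∧ i ∉ mVerts M := by
  rw [mem_mVerts]
  unfold IsMatching
  grind

lemma isMatching_insert_iff {e : Fin n × Fin n} (he : e ∉ M) :
    IsMatching lam A (insert e M) ↔
      (e.1 < e.2 ∧ lam e.1 e.2 ≠ 0 ∧ e.1 ∈ A ∧ e.2 ∈ A) ∧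
        IsMatching lam ((A.erase e.1).erase e.2) M := by
  simp only [IsMatching, forall_mem_insert, mem_erase]
  grind

lemma matchings_empty : matchings lam ∅ = {∅} := by
  ext M
  rw [mem_matchings, mem_singleton, IsMatching]
  grind

lemma mu_empty : mu r lam ∅ = 1 := by
  simp [mu, matchings_empty]

noncomputable def matchingTerm (r : Fin n → ℝ) (lam : Fin n → Fin n → ℝ) (A : Finset (Fin n))
    (M : Finset (Fin n × Fin n)) : ℝ[X] :=
  (∏ i ∈ A \ mVerts M, (X - C (r i))) * C (∏ e ∈ M, lam e.1 e.2)

lemma mu_eq_sum_matchingTerm : mu r lam A = ∑ M ∈ matchings lam A, matchingTerm r lam A M := rfl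

lemma sum_matchingTerm_filter_notMem_mVerts {i : Fin n} (hi : i ∈ A) :
    ∑ M ∈ matchings lam A with i ∉ mVerts M, matchingTerm r lam A M
      = (X - C (r i)) * mu r lam (A.erase i) := by
  have hfilter : {M ∈ matchings lam A | i ∉ mVerts M} = matchings lam (A.erase i) := by
    ext M
    simp only [mem_filter, mem_matchings, isMatching_erase_iff]
  rw [hfilter, mu_eq_sum_matchingTerm, mul_sum]
  refine sum_congr rfl fun M hM => ?_
  have hiM := (isMatching_erase_iff.1 (mem_matchings.1 hM)).2
  have hsdiff : A \ mVerts M = insert i (A.erase i \ mVerts M) := by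
    rw [← insert_sdiff_of_notMem _ hiM, insert_erase hi]
  rw [matchingTerm, matchingTerm, hsdiff, prod_insert (by simp), mul_assoc]

lemma matchingTerm_insert {e : Fin n × Fin n} (he : e ∉ M) :
    matchingTerm r lam A (insert e M)
      = C (lam e.1 e.2) * matchingTerm r lam ((A.erase e.1).erase e.2) M := by
  have hsdiff : A \ mVerts (insert e M) = (A.erase e.1).erase e.2 \ mVerts M := by
    ext v
    simp only [mem_sdiff, mem_erase, mem_mVerts, exists_mem_insert]
    grind
  rw [matchingTerm, matchingTerm, hsdiff, prod_insert he, map_mul]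
  ring

lemma sum_matchingTerm_filter_mem {e : Fin n × Fin n} (he : e.1 < e.2) (he₁ : e.1 ∈ A)
    (he₂ : e.2 ∈ A) :
    ∑ M ∈ matchings lam A with e ∈ M, matchingTerm r lam A M
      = C (lam e.1 e.2) * mu r lam ((A.erase e.1).erase e.2) := by
  by_cases hlam : lam e.1 e.2 = 0
  · rw [hlam, C_0, zero_mul]
    refine sum_eq_zero fun M hM => ?_
    rw [mem_filter, mem_matchings] at hM
    exact absurd hlam (hM.1.1 e hM.2).2.1
  have heM {M'} (hM' : M' ∈ matchings lam ((A.erase e.1).erase e.2)) : e ∉ M' := fun h =>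
    by simpa using ((mem_matchings.1 hM').1 e h).2.2.1
  rw [mu_eq_sum_matchingTerm, mul_sum]
  refine (sum_nbij' (insert e) (fun M => M.erase e) (fun M' hM' => ?_) (fun M hM => ?_)
    (fun M' hM' => erase_insert (heM hM')) (fun M hM => insert_erase (mem_filter.1 hM).2)
    (fun M' hM' => (matchingTerm_insert (heM hM')).symm)).symm
  · rw [mem_filter, mem_matchings, isMatching_insert_iff (heM hM')]
    exact ⟨⟨⟨he, hlam, he₁, he₂⟩, mem_matchings.1 hM'⟩, mem_insert_self e M'⟩
  · rw [mem_filter, mem_matchings] at hM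
    rw [← insert_erase hM.2, isMatching_insert_iff (notMem_erase e M)] at hM
    exact mem_matchings.2 hM.1.2

def edge (i k : Fin n) : Fin n × Fin n := (min i k, max i k)

lemma lam_edge (hsym : ∀ j k, lam j k = lam k j) (i k : Fin n) :
    lam (edge i k).1 (edge i k).2 = lam i k := by
  rcases le_total i k with h | h <;> simp [edge, h, hsym i k]

lemma erase_erase_edge (i k : Fin n) :
    (A.erase (edge i k).1).erase (edge i k).2 = (A.erase i).erase k := by
  rcases le_total i k with h | h <;> simp [edge, h, erase_right_comm]

lemma filter_mem_mVerts_eq_biUnion {i : Fin n} :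
    {M ∈ matchings lam A | i ∈ mVerts M}
      = (A.erase i).biUnion fun k => {M ∈ matchings lam A | edge i k ∈ M} := by
  ext M
  simp only [mem_filter, mem_biUnion, mem_erase, mem_matchings, mem_mVerts]
  constructor
  · rintro ⟨hM, e, he, hie⟩
    obtain ⟨hlt, -, he₁, he₂⟩ := hM.1 e he
    rcases hie with rfl | rfl
    · exact ⟨e.2, ⟨hlt.ne', he₂⟩, hM, by simpa [edge, hlt.le] using he⟩
    · exact ⟨e.1, ⟨hlt.ne, he₁⟩, hM, by simpa [edge, hlt.le] using he⟩
  · rintro ⟨k, -, hM, hk⟩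
    refine ⟨hM, edge i k, hk, ?_⟩
    rcases le_total i k with h | h <;> simp [edge, h]

lemma pairwiseDisjoint_filter_edge_mem (i : Fin n) :
    (A.erase i : Set (Fin n)).PairwiseDisjoint fun k => {M ∈ matchings lam A | edge i k ∈ M} := by
  intro k hk k' hk' hkk'
  refine disjoint_filter.2 fun M hM hkM hk'M => hkk' ?_
  have hedge := (mem_matchings.1 hM).eq_of_mem_of_mem hkM hk'M (v := i)
    (by rcases le_total i k with h | h <;> simp [edge, h])
    (by rcases le_total i k' with h | h <;> simp [edge, h])
  simp only [edge, Prod.mk.injEq] at hedge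
  grind

theorem mu_eq_X_sub_C_mul_add_sum (hsym : ∀ j k, lam j k = lam k j) {i : Fin n} (hi : i ∈ A) :
    mu r lam A = (X - C (r i)) * mu r lam (A.erase i)
      + ∑ k ∈ A.erase i, C (lam i k) * mu r lam ((A.erase i).erase k) := by
  rw [mu_eq_sum_matchingTerm, ← sum_filter_not_add_sum_filter _ (i ∈ mVerts ·),
    sum_matchingTerm_filter_notMem_mVerts hi, filter_mem_mVerts_eq_biUnion,
    sum_biUnion (pairwiseDisjoint_filter_edge_mem i)]
  refine congrArg _ (sum_congr rfl fun k hk => ?_)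
  obtain ⟨hki, hkA⟩ := mem_erase.1 hk
  rw [sum_matchingTerm_filter_mem, lam_edge hsym, erase_erase_edge]
  all_goals rcases lt_or_gt_of_ne hki with h | h <;> simp [edge, h, h.le, hi, hkA]

end MatchingPolynomial

section Interlacing

open Finset

variable {n : ℕ} {r : Fin n → ℝ} {lam : Fin n → Fin n → ℝ}

theorem sq_mu_erase_le_wronskian (hsym : ∀ j k, lam j k = lam k j)
    (hnonpos : ∀ j k, lam j k ≤ 0) (A : Finset (Fin n)) {i : Fin n} (hi : i ∈ A) (x : ℝ) :
    (mu r lam (A.erase i)).eval x ^ 2 ≤ (wronskian (mu r lam (A.erase i)) (mu r lam A)).eval x := by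
  induction A using Finset.strongInduction generalizing i x with
  | H A ih =>
    refine sq_le_wronskian_of_eq_sum (fun k _ => hnonpos i k) (fun k hk y => ?_)
      (mu_eq_X_sub_C_mul_add_sum hsym hi) x
    exact (sq_nonneg _).trans (ih _ (erase_ssubset hi) hk y)

theorem mu_ne_zero (hsym : ∀ j k, lam j k = lam k j) (hnonpos : ∀ j k, lam j k ≤ 0)
    (A : Finset (Fin n)) : mu r lam A ≠ 0 := by
  induction A using Finset.induction_on with
  | empty => simp [mu_empty]
  | insert a s ha ih =>
    refine ne_zero_of_sq_le_wronskian ih fun x => ?_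
    simpa [erase_insert ha] using sq_mu_erase_le_wronskian hsym hnonpos _ (mem_insert_self a s) x

theorem rootMultiplicity_mu_le_succ (hsym : ∀ j k, lam j k = lam k j)
    (hnonpos : ∀ j k, lam j k ≤ 0) {A : Finset (Fin n)} {i : Fin n} (hi : i ∈ A) (θ : ℝ) :
    (mu r lam A).rootMultiplicity θ ≤ (mu r lam (A.erase i)).rootMultiplicity θ + 1 :=
  rootMultiplicity_le_succ_of_sq_le_wronskian (mu_ne_zero hsym hnonpos _)
    (sq_mu_erase_le_wronskian hsym hnonpos A hi) θ

theorem rootMultiplicity_mu_erase_le_succ (hsym : ∀ j k, lam j k = lam k j)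
    (hnonpos : ∀ j k, lam j k ≤ 0) {A : Finset (Fin n)} {i : Fin n} (hi : i ∈ A) (θ : ℝ) :
    (mu r lam (A.erase i)).rootMultiplicity θ ≤ (mu r lam A).rootMultiplicity θ + 1 := by
  set m := (mu r lam (A.erase i)).rootMultiplicity θ
  have hdvd : (X - C θ) ^ (m - 1) ∣ mu r lam A := by
    rw [mu_eq_X_sub_C_mul_add_sum hsym hi]
    refine dvd_add (dvd_mul_of_dvd_right ((pow_dvd_pow _ (Nat.sub_le m 1)).trans
      (pow_rootMultiplicity_dvd _ θ)) _) (dvd_sum fun k hk => dvd_mul_of_dvd_right ?_ _)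
    have hk := rootMultiplicity_mu_le_succ (r := r) hsym hnonpos hk θ
    exact (pow_dvd_pow _ (by omega)).trans (pow_rootMultiplicity_dvd _ θ)
  have := (le_rootMultiplicity_iff (mu_ne_zero hsym hnonpos A)).2 hdvd
  omega

end Interlacing

theorem stmt_6_general (n : ℕ) (r : Fin n → ℝ) (lam : Fin n → Fin n → ℝ)
    (hsym : ∀ j k, lam j k = lam k j) (hnonpos : ∀ j k, lam j k ≤ 0) (i : Fin n) :
    (∀ a b : ℝ, a < b →
        (mu r lam (Finset.univ : Finset (Fin n))).IsRoot a →
        (mu r lam Finset.univ).IsRoot b →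
        ∃ c : ℝ, a ≤ c ∧ c ≤ b ∧ (mu r lam (Finset.univ.erase i)).IsRoot c) ∧
    (∀ a b : ℝ, a < b →
        (mu r lam (Finset.univ.erase i)).IsRoot a →
        (mu r lam (Finset.univ.erase i)).IsRoot b →
        ∃ c : ℝ, a ≤ c ∧ c ≤ b ∧ (mu r lam Finset.univ).IsRoot c) ∧
    (∀ θ : ℝ,
      (mu r lam (Finset.univ.erase i)).rootMultiplicity θ + 1 =
          (mu r lam Finset.univ).rootMultiplicity θ ∨
      (mu r lam (Finset.univ.erase i)).rootMultiplicity θ =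
          (mu r lam Finset.univ).rootMultiplicity θ ∨
      (mu r lam (Finset.univ.erase i)).rootMultiplicity θ =
          (mu r lam Finset.univ).rootMultiplicity θ + 1) := by
  have hi := Finset.mem_univ i
  have hW x : 0 ≤ (wronskian (mu r lam (Finset.univ.erase i)) (mu r lam Finset.univ)).eval x :=
    (sq_nonneg _).trans (sq_mu_erase_le_wronskian hsym hnonpos _ hi x)
  refine ⟨fun a b hab ha hb => ?_, fun a b hab ha hb => ?_, fun θ => ?_⟩
  · exact exists_isRoot_mem_Icc_of_wronskian_nonneg (mu_ne_zero hsym hnonpos _) hW hab ha hb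
  · have hW' x :
        0 ≤ (wronskian (-mu r lam Finset.univ) (mu r lam (Finset.univ.erase i))).eval x := by
      rw [wronskian_neg_left, wronskian_neg_eq]; exact hW x
    obtain ⟨c, hac, hcb, hc⟩ :=
      exists_isRoot_mem_Icc_of_wronskian_nonneg (mu_ne_zero hsym hnonpos _) hW' hab ha hb
    exact ⟨c, hac, hcb, by simpa using hc⟩
  · have := rootMultiplicity_mu_le_succ (r := r) hsym hnonpos hi θ
    have := rootMultiplicity_mu_erase_le_succ (r := r) hsym hnonpos hi θ
    omega

/-- (Interlacing) between any two roots of `μ(G)` there is a root of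
`μ(G∖i)` and vice versa; moreover `m_θ(G∖i) ∈ {m_θ(G) − 1, m_θ(G), m_θ(G) + 1}`. -/
theorem stmt_6 (n : ℕ) (hn : 0 < n) (r : Fin n → ℝ) (lam : Fin n → Fin n → ℝ)
    (hsym : ∀ j k, lam j k = lam k j) (hnonpos : ∀ j k, lam j k ≤ 0)
    (hdiag : ∀ i, lam i i = 0) (i : Fin n) :
    (∀ a b : ℝ, a < b →
        (mu r lam (Finset.univ : Finset (Fin n))).IsRoot a →
        (mu r lam Finset.univ).IsRoot b →
        ∃ c : ℝ, a ≤ c ∧ c ≤ b ∧ (mu r lam (Finset.univ.erase i)).IsRoot c) ∧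
    (∀ a b : ℝ, a < b →
        (mu r lam (Finset.univ.erase i)).IsRoot a →
        (mu r lam (Finset.univ.erase i)).IsRoot b →
        ∃ c : ℝ, a ≤ c ∧ c ≤ b ∧ (mu r lam Finset.univ).IsRoot c) ∧
    (∀ θ : ℝ,
      (mu r lam (Finset.univ.erase i)).rootMultiplicity θ + 1 =
          (mu r lam Finset.univ).rootMultiplicity θ ∨
      (mu r lam (Finset.univ.erase i)).rootMultiplicity θ =
          (mu r lam Finset.univ).rootMultiplicity θ ∨
      (mu r lam (Finset.univ.erase i)).rootMultiplicity θ =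
          (mu r lam Finset.univ).rootMultiplicity θ + 1) :=
  stmt_6_general n r lam hsym hnonpos i
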